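/- If z: [0, π] → ℝ is nonnegative and periodic with period π/3 (i.e., z(α + π/3) = z(α) whenever both arguments lie in [0, π], extended periodically), then ∫₀^π z(α)·|cos(π/2 − α)| dα = ∫₀^π z(α)·|cos(π/6 − α)| dα, and similarly ∫₀^π z(α)·|cos(5π/6 − α)| dα = ∫₀^π z(α)·|cos(π/6 − α)| dα. -/

import Mathlib

open Real MeasureTheory

/-- Substituting `α ↦ α + c` moves the window `[0, T]` to `[-c, T - c]`, which does not change
the integral of the `T`-periodic integrand. -/
theorem Function.Periodic.intervalIntegral_mul_comp_add_sub {z w : ℝ → ℝ} {c T : ℝ}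
    (hzc : Function.Periodic z c) (hzT : Function.Periodic z T) (hw : Function.Periodic w T)
    (γ : ℝ) :
    ∫ α in (0:ℝ)..T, z α * w (γ + c - α) = ∫ α in (0:ℝ)..T, z α * w (γ - α) :=
  calc ∫ α in (0:ℝ)..T, z α * w (γ + c - α)
      = ∫ α in -c..-c + T, z (α + c) * w (γ + c - (α + c)) := by
        rw [intervalIntegral.integral_comp_add_right (fun α => z α * w (γ + c - α))]
        simp only [neg_add_cancel, neg_add_cancel_comm]
    _ = ∫ α in -c..-c + T, z α * w (γ - α) := by
        simp only [show ∀ α, z (α + c) = z α from hzc, add_sub_add_right_eq_sub]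
    _ = ∫ α in (0:ℝ)..0 + T, z α * w (γ - α) :=
        (hzT.mul (hw.const_sub γ)).intervalIntegral_add_eq _ _
    _ = ∫ α in (0:ℝ)..T, z α * w (γ - α) := by rw [zero_add]

theorem Real.abs_cos_periodic : Function.Periodic (fun x => |cos x|) π := fun x => by
  simp only [cos_add_pi, abs_neg]

theorem periodic_weight_integral_eq_general (z : ℝ → ℝ)
    (hper : ∀ α, z (α + π/3) = z α) :
    (∫ α in (0:ℝ)..π, z α * |Real.cos (π/2 - α)|) =
      (∫ α in (0:ℝ)..π, z α * |Real.cos (π/6 - α)|) ∧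
    (∫ α in (0:ℝ)..π, z α * |Real.cos (5*π/6 - α)|) =
      (∫ α in (0:ℝ)..π, z α * |Real.cos (π/6 - α)|) := by
  have hzπ : Function.Periodic z π := by
    simpa only [Nat.cast_ofNat, mul_div_cancel₀ π three_ne_zero] using
      (show Function.Periodic z (π/3) from hper).nat_mul 3
  have shift (γ : ℝ) := Function.Periodic.intervalIntegral_mul_comp_add_sub
    (c := π/3) hper hzπ abs_cos_periodic γ
  have h₁ : ∫ α in (0:ℝ)..π, z α * |cos (π/2 - α)| =
      ∫ α in (0:ℝ)..π, z α * |cos (π/6 - α)| := by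
    simpa only [show π/6 + π/3 = π/2 by ring] using shift (π/6)
  have h₂ : ∫ α in (0:ℝ)..π, z α * |cos (5*π/6 - α)| =
      ∫ α in (0:ℝ)..π, z α * |cos (π/2 - α)| := by
    simpa only [show π/2 + π/3 = 5*π/6 by ring] using shift (π/2)
  exact ⟨h₁, h₂.trans h₁⟩

theorem periodic_weight_integral_eq (z : ℝ → ℝ)
    (hpos : ∀ α, 0 ≤ z α) (hper : ∀ α, z (α + π/3) = z α) :
    (∫ α in (0:ℝ)..π, z α * |Real.cos (π/2 - α)|) =
      (∫ α in (0:ℝ)..π, z α * |Real.cos (π/6 - α)|) ∧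
    (∫ α in (0:ℝ)..π, z α * |Real.cos (5*π/6 - α)|) =
      (∫ α in (0:ℝ)..π, z α * |Real.cos (π/6 - α)|) :=
  periodic_weight_integral_eq_general z hper
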